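/- Let Ω be finite, P₁, …, P_k probability measures each with P_j(A) > 0 for a fixed event A. Define E-admissibility over a finite set S of gambles: X ∈ C(S) iff ∃j, ∀Y ∈ S, E_{P_j}(X) ≥ E_{P_j}(Y). For gambles X₁, …, Xₙ and Z with A ≠ Ω, set W_i = 1_A·X_i + 1_{Aᶜ}·Z. Then W_i ∈ C({W₁,…,Wₙ}) if and only if X_i belongs to the conditional E-admissible set, i.e. ∃j, ∀m, E_{P_j}(X_i | A) ≥ E_{P_j}(X_m | A). -/
import Mathlib


open Finset

/-- Expectation of a gamble under a pmf on a finite space. -/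
noncomputable def expE {Ω : Type*} [Fintype Ω] (p : Ω → ℝ) (X : Ω → ℝ) : ℝ :=
  ∑ ω, X ω * p ω

/-- Conditional expectation `(Σ_{ω∈A} X(ω)p(ω))/p(A)` on a finite space. -/
noncomputable def condE {Ω : Type*} [Fintype Ω] (p : Ω → ℝ) (X : Ω → ℝ) (A : Finset Ω) : ℝ :=
  (∑ ω ∈ A, X ω * p ω) / (∑ ω ∈ A, p ω)

/-- E-admissibility is subtree perfect for a chance node followed by a single
decision node: `1_A·Xᵢ + 1_{Aᶜ}·Z` is E-admissible among the `1_A·Xₘ + 1_{Aᶜ}·Z`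
iff `Xᵢ` is conditionally E-admissible among the `Xₘ` given `A`. -/
theorem eAdmissibility_chance_node {Ω : Type*} [Fintype Ω] [DecidableEq Ω]
    (k n : ℕ) (P : Fin k → Ω → ℝ)
    (hnn : ∀ j, ∀ ω, 0 ≤ P j ω) (hsum : ∀ j, ∑ ω, P j ω = 1)
    (A : Finset Ω) (hA : ∀ j, 0 < ∑ ω ∈ A, P j ω) (hAne : A ≠ Finset.univ)
    (X : Fin n → Ω → ℝ) (Z : Ω → ℝ) (i : Fin n) :
    (∃ j, ∀ m, expE (P j) (fun ω => if ω ∈ A then X m ω else Z ω)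
              ≤ expE (P j) (fun ω => if ω ∈ A then X i ω else Z ω))
      ↔ (∃ j, ∀ m, condE (P j) (X m) A ≤ condE (P j) (X i) A) := by
  apply exists_congr
  intro j
  apply forall_congr'
  intro m
  have hpa := hA j
  have hdec : ∀ (Y : Ω → ℝ), (∑ ω, (if ω ∈ A then Y ω else Z ω) * P j ω)
      = (∑ ω ∈ A, Y ω * P j ω) + ∑ ω ∈ Aᶜ, Z ω * P j ω := by
    intro Y
    rw [← Finset.sum_add_sum_compl A]
    congr 1
    · exact Finset.sum_congr rfl fun ω hω => by rw [if_pos hω]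
    · exact Finset.sum_congr rfl fun ω hω => by rw [if_neg (Finset.mem_compl.mp hω)]
  unfold expE condE
  rw [hdec, hdec, add_le_add_iff_right]
  exact (div_le_div_iff_of_pos_right hpa).symm
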